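/- arXiv:1604.06516 — 3 statements merged into one kernel-verified Lean document; each statement's English description precedes it below -/
import Mathlib

section
/- Let B, C be n×n real matrices such that for every x ∈ ℝ^n the orbit {e^{sC} x : s ∈ ℝ} is contained in the orbit {e^{tB} x : t ∈ ℝ}, and suppose there is no c ∈ ℝ with C = cB. Then there exists x ∈ ℝ^n such that the vectors Bx and Cx are linearly independent. -/
/-!
A point of `ker B` is fixed by every `e^{tB}`, hence by every `e^{sC}`, and differentiating at
`s = 0` gives `ker B ≤ ker C`. If `Bx` and `Cx` were dependent for every `x`, then `C` would
factor as `D ∘ B` with `D` an endomorphism of `range B` such that `D y` is a multiple of `y` for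
every `y`; such a `D` is a homothety, so `C` is a multiple of `B`.
-/

open NormedSpace

namespace LinearMap

variable {K V W : Type*} [Field K] [AddCommGroup V] [Module K V] [AddCommGroup W] [Module K W]

theorem apply_mem_range_of_ker_le_of_notLinearIndependent {B C : V →ₗ[K] W}
    (hker : ker B ≤ ker C) {x : V} (hx : ¬ LinearIndependent K ![B x, C x]) :
    C x ∈ range B := by
  by_cases hBx : B x = 0
  · rw [show C x = 0 from hker hBx]
    exact zero_mem _
  · obtain ⟨a, ha⟩ := not_forall_not.mp (mt (LinearIndependent.pair_iff' hBx).mpr hx)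
    exact ⟨a • x, by rw [map_smul, ha]⟩

theorem exists_eq_smul_of_ker_le_of_forall_notLinearIndependent {B C : V →ₗ[K] W}
    (hker : ker B ≤ ker C) (h : ∀ x, ¬ LinearIndependent K ![B x, C x]) :
    ∃ c : K, C = c • B := by
  let g : range B →ₗ[K] W := (ker B).liftQ C hker ∘ₗ B.quotKerEquivRange.symm.toLinearMap
  have hg : ∀ x, g ⟨B x, mem_range_self B x⟩ = C x := fun x => by
    simp [g, quotKerEquivRange_symm_apply_image]
  let f : range B →ₗ[K] range B := codRestrict (range B) g (by
    rintro ⟨_, x, rfl⟩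
    exact hg x ▸ apply_mem_range_of_ker_le_of_notLinearIndependent hker (h x))
  obtain ⟨c, hc⟩ := exists_eq_smul_id_of_forall_notLinearIndependent (f := f) (by
    rintro ⟨_, x, rfl⟩ hli
    have hcomp : ![B x, C x] =
        (range B).subtype ∘ ![⟨B x, mem_range_self B x⟩, f ⟨B x, mem_range_self B x⟩] := by
      ext i
      fin_cases i <;> simp [f, hg]
    exact h x (hcomp ▸ hli.map' _ (range B).ker_subtype))
  refine ⟨c, ext fun x => ?_⟩
  simpa [f, hg] using congr_arg (fun g => (g ⟨B x, mem_range_self B x⟩ : W)) hc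

end LinearMap

section ExpFlow

variable {𝕂 E : Type*} [RCLike 𝕂] [NormedAddCommGroup E] [NormedSpace 𝕂 E] [CompleteSpace E]

theorem hasDerivAt_exp_smul_apply (B : E →L[𝕂] E) (x : E) (t : 𝕂) :
    HasDerivAt (fun u : 𝕂 => exp (u • B) x) (exp (t • B) (B x)) t := by
  simpa using (hasDerivAt_exp_smul_const B t).clm_apply (hasDerivAt_const t x)

theorem exp_smul_apply_eq_self_of_apply_eq_zero {B : E →L[𝕂] E} {x : E} (hx : B x = 0)
    (t : 𝕂) : exp (t • B) x = x := by
  have hd : ∀ u : 𝕂, HasDerivAt (fun u : 𝕂 => exp (u • B) x) 0 u := fun u => by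
    simpa [hx] using hasDerivAt_exp_smul_apply B x u
  simpa using is_const_of_deriv_eq_zero (fun u => (hd u).differentiableAt)
    (fun u => (hd u).deriv) t 0

theorem apply_eq_zero_of_forall_exp_smul_apply_eq_self {C : E →L[𝕂] E} {x : E}
    (h : ∀ s : 𝕂, exp (s • C) x = x) : C x = 0 := by
  have hconst : HasDerivAt (fun s : 𝕂 => exp (s • C) x) 0 0 := by
    simpa only [h] using hasDerivAt_const (0 : 𝕂) x
  simpa using (hasDerivAt_exp_smul_apply C x 0).unique hconst

theorem ker_le_ker_of_exp_orbit_subset {B C : E →L[𝕂] E}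
    (horb : ∀ x : E, ∀ s : 𝕂, ∃ t : 𝕂, exp (s • C) x = exp (t • B) x) :
    LinearMap.ker (B : E →ₗ[𝕂] E) ≤ LinearMap.ker (C : E →ₗ[𝕂] E) := fun x hx =>
  apply_eq_zero_of_forall_exp_smul_apply_eq_self fun s => by
    obtain ⟨t, ht⟩ := horb x s
    rw [ht, exp_smul_apply_eq_self_of_apply_eq_zero hx]

end ExpFlow

/-- If every orbit of the linear flow `e^{sC}` is contained in the corresponding
orbit of `e^{tB}`, and `C` is not a scalar multiple of `B`, then at some point `x`
the vectors `Bx` and `Cx` are linearly independent. -/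
theorem transversal_point_of_not_proportional
    (n : ℕ)
    (B C : EuclideanSpace ℝ (Fin n) →L[ℝ] EuclideanSpace ℝ (Fin n))
    (horb : ∀ x : EuclideanSpace ℝ (Fin n), ∀ s : ℝ, ∃ t : ℝ,
        NormedSpace.exp (s • C) x = NormedSpace.exp (t • B) x)
    (hprop : ¬ ∃ c : ℝ, C = c • B) :
    ∃ x : EuclideanSpace ℝ (Fin n), LinearIndependent ℝ ![B x, C x] := by
  by_contra! hdep
  obtain ⟨c, hc⟩ := LinearMap.exists_eq_smul_of_ker_le_of_forall_notLinearIndependent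
    (ker_le_ker_of_exp_orbit_subset horb) hdep
  exact hprop ⟨c, ContinuousLinearMap.coe_injective hc⟩
end

section
/- Let φ be a flow on a compact metric space, Λ a compact φ-invariant set on which φ is expansive in the sense of Komuro, and ψ a flow commuting with φ on Λ. Suppose regular periodic orbits of φ|_Λ have periods bounded below by ε₀ > 0. Then for any 0 < ε < ε₀/3 there exist μ > 0 and a unique map z: [−μ, μ] × (Λ \ Sing(φ)) → (−ε, ε) such that ψ_s(x) = φ_{z(s,x)}(x) for all |s| ≤ μ and all regular x ∈ Λ. The uniqueness part: if z₁, z₂: [−μ,μ] × (Λ \ Sing(φ)) → (−ε, ε) both satisfy φ_{z_i(s,x)}(x) = ψ_s(x), then z₁ = z₂. -/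
/-- For a Komuro-expansive flow `φ` on a compact invariant set `Λ` whose regular
periodic orbits have periods bounded below by `ε₀`, any commuting flow `ψ` is, for
small times, a unique local reparameterization of `φ` on the regular points of `Λ`. -/
theorem local_reparameterization_of_commuting_flow
    {M : Type*} [MetricSpace M] [CompactSpace M]
    (φ ψ : ℝ → M → M)
    (hφ0 : ∀ x, φ 0 x = x) (hφadd : ∀ t s x, φ (t + s) x = φ t (φ s x))
    (hψ0 : ∀ x, ψ 0 x = x) (hψadd : ∀ t s x, ψ (t + s) x = ψ t (ψ s x))
    (hφcont : Continuous fun q : ℝ × M => φ q.1 q.2)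
    (hψcont : Continuous fun q : ℝ × M => ψ q.1 q.2)
    (hcomm : ∀ t s x, φ t (ψ s x) = ψ s (φ t x))
    (Λ : Set M) (hΛcomp : IsCompact Λ)
    (hΛφ : ∀ t, ∀ x ∈ Λ, φ t x ∈ Λ)
    (hΛψ : ∀ s, ∀ x ∈ Λ, ψ s x ∈ Λ)
    -- Komuro expansiveness of `φ` on `Λ`
    (hexp : ∀ ε > (0:ℝ), ∃ δ > (0:ℝ), ∀ x ∈ Λ, ∀ y ∈ Λ, ∀ h : ℝ → ℝ,
      StrictMono h → Continuous h → Function.Surjective h →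
      (∀ t : ℝ, dist (φ t x) (φ (h t) y) < δ) →
      ∃ t₀ : ℝ, ∃ τ ∈ Set.Icc (t₀ - ε) (t₀ + ε), φ (h t₀) y = φ τ x)
    -- periods of regular periodic orbits in `Λ` are bounded below by `ε₀ > 0`
    (ε₀ : ℝ) (hε₀ : 0 < ε₀)
    (hper : ∀ x ∈ Λ, ¬ (∀ t : ℝ, φ t x = x) →
      ∀ T : ℝ, 0 < T → φ T x = x → ε₀ ≤ T)
    (ε : ℝ) (hε : 0 < ε) (hεsmall : ε < ε₀ / 3) :
    ∃ μ > (0:ℝ), ∃ z : ℝ → M → ℝ,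
      (∀ s ∈ Set.Icc (-μ) μ, ∀ x ∈ Λ, ¬ (∀ t : ℝ, φ t x = x) →
        z s x ∈ Set.Ioo (-ε) ε ∧ ψ s x = φ (z s x) x) ∧
      -- uniqueness: any two such local reparameterizations coincide
      (∀ z₁ z₂ : ℝ → M → ℝ,
        (∀ s ∈ Set.Icc (-μ) μ, ∀ x ∈ Λ, ¬ (∀ t : ℝ, φ t x = x) →
          z₁ s x ∈ Set.Ioo (-ε) ε ∧ ψ s x = φ (z₁ s x) x) →
        (∀ s ∈ Set.Icc (-μ) μ, ∀ x ∈ Λ, ¬ (∀ t : ℝ, φ t x = x) →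
          z₂ s x ∈ Set.Ioo (-ε) ε ∧ ψ s x = φ (z₂ s x) x) →
        ∀ s ∈ Set.Icc (-μ) μ, ∀ x ∈ Λ, ¬ (∀ t : ℝ, φ t x = x) →
          z₁ s x = z₂ s x) := by
  -- Step 1: expansiveness constant for ε/2
  obtain ⟨δ, hδ, hδexp⟩ := hexp (ε / 2) (by linarith)
  -- Step 2: uniform continuity of ψ on [-1,1] × M
  have hcompS : IsCompact ((Set.Icc (-1:ℝ) 1) ×ˢ (Set.univ : Set M)) :=
    isCompact_Icc.prod isCompact_univ
  have huc : UniformContinuousOn (fun q : ℝ × M => ψ q.1 q.2)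
      ((Set.Icc (-1:ℝ) 1) ×ˢ (Set.univ : Set M)) :=
    hcompS.uniformContinuousOn_of_continuous hψcont.continuousOn
  obtain ⟨η, hη, hηs⟩ := (Metric.uniformContinuousOn_iff).mp huc δ hδ
  set μ : ℝ := min (η / 2) 1 with hμdef
  have hμ : 0 < μ := lt_min (by linarith) one_pos
  have hsmall : ∀ s : ℝ, |s| ≤ μ → ∀ y : M, dist y (ψ s y) < δ := by
    intro s hs y
    have hmem : ((s, y) : ℝ × M) ∈ (Set.Icc (-1:ℝ) 1) ×ˢ (Set.univ : Set M) := by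
      refine ⟨abs_le.mp (hs.trans (min_le_right _ _)), trivial⟩
    have hmem0 : ((0, y) : ℝ × M) ∈ (Set.Icc (-1:ℝ) 1) ×ˢ (Set.univ : Set M) := by
      constructor
      · constructor <;> norm_num
      · trivial
    have hdist : dist ((0, y) : ℝ × M) ((s, y) : ℝ × M) < η := by
      rw [Prod.dist_eq]
      simp only [dist_self, Real.dist_eq, zero_sub, abs_neg]
      have : |s| ≤ η / 2 := hs.trans (min_le_left _ _)
      have : max |s| 0 ≤ η / 2 := max_le this (by linarith)
      linarith
    have := hηs _ hmem0 _ hmem hdist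
    simpa [hψ0] using this
  -- existence: for |s| ≤ μ, x regular in Λ, there is r ∈ (-ε, ε) with ψ s x = φ r x
  have hexists : ∀ s ∈ Set.Icc (-μ) μ, ∀ x ∈ Λ, ¬ (∀ t : ℝ, φ t x = x) →
      ∃ r : ℝ, r ∈ Set.Ioo (-ε) ε ∧ ψ s x = φ r x := by
    intro s hs x hx _
    have hsabs : |s| ≤ μ := abs_le.mpr ⟨hs.1, hs.2⟩
    have hy : ψ s x ∈ Λ := hΛψ s x hx
    have hclose : ∀ t : ℝ, dist (φ t x) (φ (id t) (ψ s x)) < δ := by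
      intro t
      have : φ t (ψ s x) = ψ s (φ t x) := hcomm t s x
      simpa [this] using hsmall s hsabs (φ t x)
    obtain ⟨t₀, τ, hτ, heq⟩ :=
      hδexp x hx (ψ s x) hy id strictMono_id continuous_id Function.surjective_id hclose
    refine ⟨τ - t₀, ⟨?_, ?_⟩, ?_⟩
    · have := hτ.1; linarith
    · have := hτ.2; linarith
    · have h1 : φ (-t₀) (φ t₀ (ψ s x)) = ψ s x := by
        rw [← hφadd]; simp [hφ0]
      have h2 : φ (-t₀) (φ τ x) = φ (τ - t₀) x := by
        rw [← hφadd]; ring_nf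
      rw [← h1]
      simp only [id] at heq
      rw [heq, h2]
  -- the cancellation lemma
  have hcancel : ∀ x ∈ Λ, ¬ (∀ t : ℝ, φ t x = x) →
      ∀ r₁ r₂ : ℝ, r₁ ∈ Set.Ioo (-ε) ε → r₂ ∈ Set.Ioo (-ε) ε →
      φ r₁ x = φ r₂ x → r₁ = r₂ := by
    intro x hx hreg r₁ r₂ h₁ h₂ heq
    have key : ∀ a b : ℝ, a ∈ Set.Ioo (-ε) ε → b ∈ Set.Ioo (-ε) ε →
        φ a x = φ b x → b < a → False := by
      intro a b ha hb hab hlt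
      have hfix : φ (a - b) x = x := by
        have e1 : φ (a - b) x = φ (-b) (φ a x) := by
          rw [← hφadd]; ring_nf
        rw [e1, hab, ← hφadd]
        simp [hφ0]
      have hT : (0:ℝ) < a - b := by linarith
      have := hper x hx hreg (a - b) hT hfix
      have h2ε : a - b < 2 * ε := by
        have := ha.2; have := hb.1; linarith
      linarith
    rcases lt_trichotomy r₁ r₂ with h | h | h
    · exact absurd (key r₂ r₁ h₂ h₁ heq.symm h) not_false
    · exact h
    · exact absurd (key r₁ r₂ h₁ h₂ heq h) not_false
  classical
  refine ⟨μ, hμ, fun s x =>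
    if h : ∃ r : ℝ, r ∈ Set.Ioo (-ε) ε ∧ ψ s x = φ r x then h.choose else 0, ?_, ?_⟩
  · intro s hs x hx hreg
    have hE := hexists s hs x hx hreg
    simp only [dif_pos hE]
    exact hE.choose_spec
  · intro z₁ z₂ h₁ h₂ s hs x hx hreg
    obtain ⟨m₁, e₁⟩ := h₁ s hs x hx hreg
    obtain ⟨m₂, e₂⟩ := h₂ s hs x hx hreg
    exact hcancel x hx hreg _ _ m₁ m₂ (e₁.symm.trans e₂)
end

section
/- Let Φ, Ψ be commuting continuous flows on a metric space M (Φ_t ∘ Ψ_s = Ψ_s ∘ Φ_t for all t, s). Suppose there are maps p₁, p₂: ℝ × M → ℝ, continuous in the first variable, with Φ(p_i(t,x), x) = Ψ(t, x) for all (t,x), agreeing on [−μ, μ] × M for some μ > 0, and suppose that reparameterization times on each orbit are locally unique: whenever Φ(a, x) = Φ(b, x) with |a − b| < 2ε₀/3 (for a fixed ε₀ > 0 bounding below all nonzero periods) then a = b, and the local reparameterization z on [−μ, μ] is unique. Then p₁(t, x) = p₂(t, x) for all t ∈ ℝ and all x ∈ M. -/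
/-- Uniqueness of the global reparameterization: two continuous-in-time
reparameterizations of the commuting flow `Ψ` by the flow `Φ` which agree on
`[-μ, μ]` agree everywhere, provided reparameterization times on orbits are
locally unique. -/
theorem global_reparameterization_unique
    {M : Type*} [MetricSpace M]
    (Φ Ψ : ℝ → M → M)
    (hΦ0 : ∀ x, Φ 0 x = x) (hΦadd : ∀ t s x, Φ (t + s) x = Φ t (Φ s x))
    (hΨ0 : ∀ x, Ψ 0 x = x) (hΨadd : ∀ t s x, Ψ (t + s) x = Ψ t (Ψ s x))
    (hcomm : ∀ t s x, Φ t (Ψ s x) = Ψ s (Φ t x))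
    (p₁ p₂ : ℝ → M → ℝ)
    (hp₁cont : ∀ x, Continuous fun t => p₁ t x)
    (hp₂cont : ∀ x, Continuous fun t => p₂ t x)
    (hp₁ : ∀ t x, Φ (p₁ t x) x = Ψ t x)
    (hp₂ : ∀ t x, Φ (p₂ t x) x = Ψ t x)
    (μ : ℝ) (hμ : 0 < μ)
    (hagree : ∀ t ∈ Set.Icc (-μ) μ, ∀ x, p₁ t x = p₂ t x)
    (ε₀ : ℝ) (hε₀ : 0 < ε₀)
    -- local uniqueness of orbit times: nonzero periods are at least `ε₀`
    (hloc : ∀ x (a b : ℝ), Φ a x = Φ b x → |a - b| < 2 * ε₀ / 3 → a = b)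
    -- uniqueness of the local reparameterization on `[-μ, μ]`
    (huniqz : ∀ z₁ z₂ : ℝ → M → ℝ,
      (∀ s ∈ Set.Icc (-μ) μ, ∀ x, |z₁ s x| < ε₀ / 3 ∧ Φ (z₁ s x) x = Ψ s x) →
      (∀ s ∈ Set.Icc (-μ) μ, ∀ x, |z₂ s x| < ε₀ / 3 ∧ Φ (z₂ s x) x = Ψ s x) →
      ∀ s ∈ Set.Icc (-μ) μ, ∀ x, z₁ s x = z₂ s x) :
    ∀ (t : ℝ) (x : M), p₁ t x = p₂ t x := by
  intro t x
  set S : Set ℝ := {t | p₁ t x = p₂ t x} with hS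
  have hg : Continuous fun t => p₁ t x - p₂ t x := (hp₁cont x).sub (hp₂cont x)
  have hopen : IsOpen S := by
    rw [isOpen_iff_mem_nhds]
    intro t₀ ht₀
    have h0 : p₁ t₀ x - p₂ t₀ x = 0 := sub_eq_zero.mpr ht₀
    have hU : IsOpen ((fun t => p₁ t x - p₂ t x) ⁻¹' Metric.ball 0 (2 * ε₀ / 3)) :=
      Metric.isOpen_ball.preimage hg
    have ht₀U : t₀ ∈ (fun t => p₁ t x - p₂ t x) ⁻¹' Metric.ball 0 (2 * ε₀ / 3) := by
      simp [h0]; positivity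
    have hsub : ((fun t => p₁ t x - p₂ t x) ⁻¹' Metric.ball 0 (2 * ε₀ / 3)) ⊆ S := by
      intro s hs
      have hdist : |p₁ s x - p₂ s x| < 2 * ε₀ / 3 := by
        simpa [Real.dist_eq] using hs
      exact hloc x _ _ ((hp₁ s x).trans (hp₂ s x).symm) hdist
    exact Filter.mem_of_superset (hU.mem_nhds ht₀U) hsub
  have hclosed : IsClosed S := isClosed_eq (hp₁cont x) (hp₂cont x)
  have hne : (0 : ℝ) ∈ S := hagree 0 ⟨by linarith, by linarith⟩ x
  have hcl : IsClopen S := ⟨hclosed, hopen⟩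
  have h := hcl.eq_univ ⟨0, hne⟩
  have : t ∈ S := h ▸ Set.mem_univ t
  exact this
end
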